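/- Let K ⊆ L• be a knowledge base each of whose members is in normal form. Then for every ranked model R of K, R*_K ⪯_LM R. -/

import Mathlib

attribute [local instance] Classical.propDecidable

universe u

/-- Sentences of Propositional Typicality Logic over atoms `P`. -/
inductive PTL (P : Type u) : Type u
  | atom : P → PTL P
  | neg  : PTL P → PTL P
  | conj : PTL P → PTL P → PTL P
  | top  : PTL P
  | bot  : PTL P
  | typ  : PTL P → PTL P

namespace PTL

/-- Material implication, defined from `¬` and `∧`. -/
def impl {P : Type u} (a b : PTL P) : PTL P := neg (conj a (neg b))

/-- Disjunction, defined from `¬` and `∧`. -/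
def disj {P : Type u} (a b : PTL P) : PTL P := neg (conj (neg a) (neg b))

/-- Purely propositional sentences: no occurrence of the typicality operator. -/
def IsProp {P : Type u} : PTL P → Prop
  | atom _ => True
  | neg a => IsProp a
  | conj a b => IsProp a ∧ IsProp b
  | top => True
  | bot => True
  | typ _ => False

end PTL

/-- Propositional valuations. -/
abbrev Val (P : Type u) := P → Bool

/-- Satisfaction of a PTL sentence by a valuation, relative to a ranking
function `rho : Val P → ℕ∞`. -/
def satR {P : Type u} (rho : Val P → ℕ∞) : Val P → PTL P → Prop
  | v, PTL.atom p => v p = true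
  | v, PTL.neg a => ¬ satR rho v a
  | v, PTL.conj a b => satR rho v a ∧ satR rho v b
  | _, PTL.top => True
  | _, PTL.bot => False
  | v, PTL.typ a => satR rho v a ∧ ∀ v', rho v' < rho v → ¬ satR rho v' a

/-- The convexity property of ranking functions. -/
def RkConvex {P : Type u} (rho : Val P → ℕ∞) : Prop :=
  ∀ (v : Val P) (i : ℕ), rho v = (i : ℕ∞) → ∀ j : ℕ, j < i → ∃ v', rho v' = (j : ℕ∞)

/-- A ranked interpretation: a convex ranking function on valuations. -/
structure RankedInterp (P : Type u) where
  rk : Val P → ℕ∞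
  convex : RkConvex rk

/-- `rho` is a ranked model of `a`: every possible valuation satisfies `a`. -/
def modelsR {P : Type u} (rho : Val P → ℕ∞) (a : PTL P) : Prop :=
  ∀ v, rho v < ⊤ → satR rho v a

/-- `R ⊨ a`. -/
def RankedInterp.models {P : Type u} (R : RankedInterp P) (a : PTL P) : Prop :=
  modelsR R.rk a

/-- `R` is a ranked model of the knowledge base `K`. -/
def modelsSet {P : Type u} (R : RankedInterp P) (K : Set (PTL P)) : Prop :=
  ∀ a ∈ K, R.models a

/-- Ranked entailment consequences of `K`. -/
def Cn0 {P : Type u} (K : Set (PTL P)) : Set (PTL P) :=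
  {a | ∀ R : RankedInterp P, modelsSet R K → R.models a}

/-- Conjunction of a list of sentences (empty conjunction is `⊤`). -/
def bigConj {P : Type u} : List (PTL P) → PTL P
  | [] => PTL.top
  | a :: l => PTL.conj a (bigConj l)

/-- Disjunction of a list of sentences (empty disjunction is `⊥`). -/
def bigDisj {P : Type u} : List (PTL P) → PTL P
  | [] => PTL.bot
  | a :: l => PTL.disj a (bigDisj l)

/-- `a` is in normal form: `⋀_{i≤t} •θᵢ → (φ ∨ ⋁_{i≤s} •ψᵢ)` with all the
`θᵢ`, `φ`, `ψᵢ` purely propositional. -/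
def InNormalForm {P : Type u} (a : PTL P) : Prop :=
  ∃ (ths : List (PTL P)) (phi : PTL P) (pss : List (PTL P)),
    (∀ t ∈ ths, t.IsProp) ∧ phi.IsProp ∧ (∀ s ∈ pss, s.IsProp) ∧
    a = PTL.impl (bigConj (ths.map PTL.typ)) (PTL.disj phi (bigDisj (pss.map PTL.typ)))

/-- `R^1_S`: increase by one the rank of every valuation not in `S`. -/
noncomputable def bump {P : Type u} (rho : Val P → ℕ∞) (S : Set (Val P)) : Val P → ℕ∞ :=
  fun v => if v ∈ S then rho v else rho v + 1

/-- `R^∞_S`: make every valuation not in `S` impossible. -/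
noncomputable def toInf {P : Type u} (rho : Val P → ℕ∞) (S : Set (Val P)) : Val P → ℕ∞ :=
  fun v => if v ∈ S then rho v else ⊤

/-- `⟦K⟧_rho`: the possible valuations satisfying every member of `K`. -/
def KExt {P : Type u} (K : Set (PTL P)) (rho : Val P → ℕ∞) : Set (Val P) :=
  {v | rho v < ⊤ ∧ ∀ a ∈ K, satR rho v a}

/-- The sequence `R_i` of the LM-minimal construction. -/
noncomputable def Rseq {P : Type u} (K : Set (PTL P)) : ℕ → Val P → ℕ∞
  | 0 => fun _ => 0
  | i + 1 => bump (Rseq K i) (KExt K (Rseq K i))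

/-- The sequence `S_i` of the LM-minimal construction:
`S_0 = ∅`, `S_{i+1} = ⟦K⟧_{R_i}`. -/
noncomputable def Sseq {P : Type u} (K : Set (PTL P)) : ℕ → Set (Val P)
  | 0 => ∅
  | i + 1 => KExt K (Rseq K i)

/-- The least `i ≥ 1` with `S_i = S_{i-1}`. -/
noncomputable def stopIdx {P : Type u} (K : Set (PTL P)) : ℕ :=
  sInf {i : ℕ | 1 ≤ i ∧ Sseq K i = Sseq K (i - 1)}

/-- The LM-minimal ranked interpretation `R*_K := (R_{i-1})^∞_{S_i}`. -/
noncomputable def Rstar {P : Type u} (K : Set (PTL P)) : Val P → ℕ∞ :=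
  toInf (Rseq K (stopIdx K - 1)) (Sseq K (stopIdx K))

/-- The cell of rank `i` of a ranking function. -/
def cell {P : Type u} (rho : Val P → ℕ∞) (i : ℕ∞) : Set (Val P) :=
  {u | rho u = i}

/-- The LM preference `⪯_LM` on ranking functions: either all cells coincide,
or the cell of the first differing (finite) rank shrinks. -/
def LMle {P : Type u} (rho1 rho2 : Val P → ℕ∞) : Prop :=
  (∀ i : ℕ∞, cell rho1 i = cell rho2 i) ∨
  ∃ j : ℕ, (∀ k : ℕ, k < j → cell rho1 (k : ℕ∞) = cell rho2 (k : ℕ∞)) ∧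
    cell rho1 (j : ℕ∞) ≠ cell rho2 (j : ℕ∞) ∧ cell rho2 (j : ℕ∞) ⊆ cell rho1 (j : ℕ∞)

/-- Strict LM preference. -/
def LMlt {P : Type u} (rho1 rho2 : Val P → ℕ∞) : Prop :=
  LMle rho1 rho2 ∧ ¬ LMle rho2 rho1

/-!
Let `e v` be the least `k` with `v ∈ S_{k+1}` (`∞` if there is none). For a knowledge base in
normal form, `R_i` ranks `v` at `min i (e v)`, i.e. the valuations of `R_i`-rank below `k ≤ i` are
exactly `S_k`. Since `•` is applied only to propositional sentences, the truth of a sentence in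
normal form at `v` depends only on the set of valuations strictly below `v`. Hence
`S_i ⊆ S_{i+1}`, the sequence is constant once `S_{i+1} = S_i`, and `R*_K` ranks every `v` at
`e v`.

Now let `R ⊨ K` and let `j` be the first rank at which the cells of `R*_K` and `R` differ. Below
rank `j` both contain exactly `S_j`, so a valuation `v` of `R`-rank `j` lies outside `S_j`, has
`R_j`-rank `j`, and sees below it the same valuations under `R_j` as under `R`. It therefore
satisfies `K` under `R_j`, i.e. `v ∈ S_{j+1}`, and `R*_K` ranks it at `j`.
-/

open PTL

variable {P : Type u}

lemma satR_congr_of_isProp {a : PTL P} (ha : a.IsProp) (rho rho' : Val P → ℕ∞) (v : Val P) :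
    satR rho v a ↔ satR rho' v a := by
  induction a with
  | atom p => rfl
  | neg a ih => exact not_congr (ih ha)
  | conj a b iha ihb => exact and_congr (iha ha.1) (ihb ha.2)
  | top => rfl
  | bot => rfl
  | typ a _ => exact ha.elim

lemma satR_typ_congr {θ : PTL P} (hθ : θ.IsProp) {rho rho' : Val P → ℕ∞} {v : Val P}
    (h : ∀ u, rho u < rho v ↔ rho' u < rho' v) :
    satR rho v (typ θ) ↔ satR rho' v (typ θ) := by
  simp only [satR, satR_congr_of_isProp hθ rho rho', h]

lemma satR_impl (rho : Val P → ℕ∞) (v : Val P) (a b : PTL P) :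
    satR rho v (impl a b) ↔ (satR rho v a → satR rho v b) := by
  simp only [impl, satR]; tauto

lemma satR_disj (rho : Val P → ℕ∞) (v : Val P) (a b : PTL P) :
    satR rho v (disj a b) ↔ (satR rho v a ∨ satR rho v b) := by
  simp only [disj, satR]; tauto

lemma satR_bigConj (rho : Val P → ℕ∞) (v : Val P) (l : List (PTL P)) :
    satR rho v (bigConj l) ↔ ∀ a ∈ l, satR rho v a := by
  induction l with
  | nil => simp [bigConj, satR]
  | cons a l ih => simp [bigConj, satR, ih]

lemma satR_bigDisj (rho : Val P → ℕ∞) (v : Val P) (l : List (PTL P)) :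
    satR rho v (bigDisj l) ↔ ∃ a ∈ l, satR rho v a := by
  induction l with
  | nil => simp [bigDisj, satR]
  | cons a l ih => simp [bigDisj, satR_disj, ih]

lemma satR_congr_of_inNormalForm {a : PTL P} (ha : InNormalForm a) {rho rho' : Val P → ℕ∞}
    {v : Val P} (h : ∀ u, rho u < rho v ↔ rho' u < rho' v) :
    satR rho v a ↔ satR rho' v a := by
  obtain ⟨ths, φ, pss, hths, hφ, hpss, rfl⟩ := ha
  simp only [satR_impl, satR_disj, satR_bigConj, satR_bigDisj, List.mem_map,
    forall_exists_index, and_imp, forall_apply_eq_imp_iff₂, exists_exists_and_eq_and,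
    satR_congr_of_isProp hφ rho rho']
  exact imp_congr (forall₂_congr fun θ hθ => satR_typ_congr (hths θ hθ) h) <| or_congr_right <|
    exists_congr fun ψ => and_congr_right fun hψ => satR_typ_congr (hpss ψ hψ) h

section Cells

variable {rho1 rho2 : Val P → ℕ∞}

lemma eq_of_forall_cell_natCast_eq (h : ∀ k : ℕ, cell rho1 k = cell rho2 k) : rho1 = rho2 := by
  funext u
  have key : ∀ k : ℕ, rho1 u = k ↔ rho2 u = k := fun k => Set.ext_iff.1 (h k) u
  induction h1 : rho1 u using ENat.recTopCoe with
  | top =>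
    induction h2 : rho2 u using ENat.recTopCoe with
    | top => rfl
    | coe k => exact (ENat.top_ne_natCast k (h1.symm.trans ((key k).2 h2))).elim
  | coe k => exact ((key k).1 h1).symm

lemma lt_natCast_iff_of_cell_eq {j : ℕ} (h : ∀ k < j, cell rho1 k = cell rho2 k) (u : Val P) :
    rho1 u < j ↔ rho2 u < j := by
  suffices H : ∀ {rho rho' : Val P → ℕ∞}, (∀ k < j, cell rho k = cell rho' k) →
      rho u < j → rho' u < j from ⟨H h, H fun k hk => (h k hk).symm⟩
  intro rho rho' h' hu
  obtain ⟨k, hk, hkj⟩ : ∃ k : ℕ, rho u = k ∧ k < j :=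
    ⟨(rho u).toNat, (ENat.natCast_toNat hu.ne_top).symm, by
      rwa [← ENat.natCast_lt_natCast, ENat.natCast_toNat hu.ne_top]⟩
  have : rho' u = k := (Set.ext_iff.1 (h' k hkj) u).1 hk
  rw [this]; exact_mod_cast hkj

lemma LMle_of_forall_cell_subset
    (h : ∀ j : ℕ, (∀ k < j, cell rho1 k = cell rho2 k) → cell rho2 j ⊆ cell rho1 j) :
    LMle rho1 rho2 := by
  by_cases hall : ∀ k : ℕ, cell rho1 k = cell rho2 k
  · exact Or.inl fun i => by rw [eq_of_forall_cell_natCast_eq hall]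
  · push Not at hall
    classical
    have hbelow : ∀ k < Nat.find hall, cell rho1 k = cell rho2 k :=
      fun k hk => not_not.1 (Nat.find_min hall hk)
    exact Or.inr ⟨Nat.find hall, hbelow, Nat.find_spec hall, h _ hbelow⟩

end Cells

section Construction

variable {K : Set (PTL P)} {i k : ℕ} {v : Val P}

lemma Rseq_succ_of_mem (h : v ∈ Sseq K (i + 1)) : Rseq K (i + 1) v = Rseq K i v := if_pos h

lemma Rseq_succ_of_notMem (h : v ∉ Sseq K (i + 1)) : Rseq K (i + 1) v = Rseq K i v + 1 :=
  if_neg h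

lemma Rseq_le (K : Set (PTL P)) (i : ℕ) (v : Val P) : Rseq K i v ≤ i := by
  induction i with
  | zero => exact le_rfl
  | succ i ih =>
    by_cases hv : v ∈ Sseq K (i + 1)
    · rw [Rseq_succ_of_mem hv]; exact ih.trans (by simp)
    · rw [Rseq_succ_of_notMem hv, Nat.cast_succ]; gcongr

lemma Rseq_lt_top (K : Set (PTL P)) (i : ℕ) (v : Val P) : Rseq K i v < ⊤ :=
  (Rseq_le K i v).trans_lt (ENat.natCast_lt_top i)

lemma Rseq_lt_natCast_iff_of_subset_succ (hmono : ∀ j < i, Sseq K j ⊆ Sseq K (j + 1))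
    (hk : k ≤ i) : Rseq K i v < k ↔ v ∈ Sseq K k := by
  induction i generalizing k with
  | zero =>
    obtain rfl := Nat.le_zero.1 hk
    simp [Sseq]
  | succ i ih =>
    have ih' := fun {k} => ih (k := k) fun j hj => hmono j (by omega)
    by_cases hv : v ∈ Sseq K (i + 1)
    · rw [Rseq_succ_of_mem hv]
      rcases hk.lt_or_eq with hk | rfl
      · exact ih' (by omega)
      · exact iff_of_true ((Rseq_le K i v).trans_lt (by exact_mod_cast i.lt_succ_self)) hv
    · have hvi : ¬ Rseq K i v < i := fun h => hv (hmono i (by omega) ((ih' le_rfl).1 h))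
      rw [Rseq_succ_of_notMem hv]
      refine iff_of_false (not_lt.2 ?_) fun hvk => ?_
      · calc (k : ℕ∞) ≤ i + 1 := by exact_mod_cast hk
          _ ≤ Rseq K i v + 1 := by gcongr; exact not_lt.1 hvi
      · rcases hk.lt_or_eq with hk | rfl
        · exact hvi (((ih' (by omega)).2 hvk).trans_le (by exact_mod_cast Nat.lt_succ_iff.1 hk))
        · exact hv hvk

lemma exists_Rseq_eq_natCast (K : Set (PTL P)) (i : ℕ) (v : Val P) :
    ∃ k ≤ i, Rseq K i v = k :=
  ⟨(Rseq K i v).toNat, ENat.toNat_le_of_le_natCast (Rseq_le K i v),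
    (ENat.natCast_toNat (Rseq_lt_top K i v).ne).symm⟩

variable (hK : ∀ a ∈ K, InNormalForm a)
include hK

lemma Sseq_subset_succ (i : ℕ) : Sseq K i ⊆ Sseq K (i + 1) := by
  induction i using Nat.strong_induction_on with
  | _ i ih =>
  rcases i with _ | i
  · exact Set.empty_subset _
  · intro v hv
    obtain ⟨k, hki, hk⟩ := exists_Rseq_eq_natCast K i v
    have hk' : Rseq K (i + 1) v = k := (Rseq_succ_of_mem hv).trans hk
    refine ⟨Rseq_lt_top K _ v, fun a ha =>
      (satR_congr_of_inNormalForm (hK a ha) fun u => ?_).1 (hv.2 a ha)⟩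
    rw [hk, hk', Rseq_lt_natCast_iff_of_subset_succ (fun j hj => ih j (by omega)) hki,
      Rseq_lt_natCast_iff_of_subset_succ ih (by omega)]

lemma Sseq_monotone : Monotone (Sseq K) := monotone_nat_of_le_succ (Sseq_subset_succ hK)

lemma Rseq_lt_natCast_iff (hk : k ≤ i) : Rseq K i v < k ↔ v ∈ Sseq K k :=
  Rseq_lt_natCast_iff_of_subset_succ (fun j _ => Sseq_subset_succ hK j) hk

lemma Rseq_of_notMem (h : v ∉ Sseq K i) : Rseq K i v = i :=
  (Rseq_le K i v).antisymm (not_lt.1 fun hlt => h ((Rseq_lt_natCast_iff hK le_rfl).1 hlt))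

lemma Sseq_succ_succ_eq (h : Sseq K (i + 1) = Sseq K i) : Sseq K (i + 2) = Sseq K (i + 1) := by
  ext v
  suffices hlow : ∀ u, Rseq K i u < Rseq K i v ↔ Rseq K (i + 1) u < Rseq K (i + 1) v from
    and_congr (iff_of_true (Rseq_lt_top K _ v) (Rseq_lt_top K _ v))
      (forall₂_congr fun a ha => (satR_congr_of_inNormalForm (hK a ha) hlow).symm)
  intro u
  by_cases hv : v ∈ Sseq K (i + 1)
  · obtain ⟨k, hki, hk⟩ := exists_Rseq_eq_natCast K i v
    rw [Rseq_succ_of_mem hv, hk, Rseq_lt_natCast_iff hK hki, Rseq_lt_natCast_iff hK (by omega)]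
  · rw [Rseq_of_notMem hK hv, Rseq_of_notMem hK (h ▸ hv : v ∉ Sseq K i),
      Rseq_lt_natCast_iff hK le_rfl, Rseq_lt_natCast_iff hK le_rfl, h]

lemma Sseq_succ_eq_of_le (h : Sseq K (i + 1) = Sseq K i) {m : ℕ} (hm : i ≤ m) :
    Sseq K (m + 1) = Sseq K m := by
  induction m, hm using Nat.le_induction with
  | base => exact h
  | succ m _ ih => exact Sseq_succ_succ_eq hK ih

lemma Sseq_eq_of_le (h : Sseq K (i + 1) = Sseq K i) {m : ℕ} (hm : i ≤ m) :
    Sseq K m = Sseq K i := by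
  induction m, hm using Nat.le_induction with
  | base => rfl
  | succ m hm ih => exact (Sseq_succ_eq_of_le hK h hm).trans ih

lemma exists_Sseq_succ_eq [Finite P] : ∃ i, Sseq K (i + 1) = Sseq K i := by
  obtain ⟨n, hn⟩ := WellFoundedGT.monotone_chain_condition
    (⟨Sseq K, Sseq_monotone hK⟩ : ℕ →o Set (Val P))
  exact ⟨n, (hn (n + 1) n.le_succ).symm⟩

lemma stopIdx_spec [Finite P] :
    1 ≤ stopIdx K ∧ Sseq K (stopIdx K) = Sseq K (stopIdx K - 1) := by
  obtain ⟨i, hi⟩ := exists_Sseq_succ_eq hK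
  exact Nat.sInf_mem (s := {i | 1 ≤ i ∧ Sseq K i = Sseq K (i - 1)}) ⟨i + 1, by omega, hi⟩

lemma Rstar_lt_natCast_iff [Finite P] (v : Val P) (k : ℕ) : Rstar K v < k ↔ v ∈ Sseq K k := by
  obtain ⟨hn1, hn⟩ := stopIdx_spec hK
  obtain ⟨m, hm⟩ : ∃ m, stopIdx K = m + 1 := ⟨stopIdx K - 1, by omega⟩
  rw [hm, Nat.add_sub_cancel] at hn
  unfold Rstar toInf
  rw [hm, Nat.add_sub_cancel, hn]
  split_ifs with hv
  · rcases le_or_gt k m with hk | hk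
    · exact Rseq_lt_natCast_iff hK hk
    · exact iff_of_true (((Rseq_lt_natCast_iff hK le_rfl).2 hv).trans (by exact_mod_cast hk))
        (Sseq_monotone hK hk.le hv)
  · refine iff_of_false (by simp) fun hvk => hv ?_
    rw [← Sseq_eq_of_le hK hn (m.le_add_left k)]
    exact Sseq_monotone hK (k.le_add_right m) hvk

lemma mem_Sseq_succ_of_modelsR {rho : Val P → ℕ∞} (hrho : ∀ a ∈ K, modelsR rho a) {j : ℕ}
    (hlow : ∀ u, rho u < j ↔ u ∈ Sseq K j) (hv : rho v = j) : v ∈ Sseq K (j + 1) := by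
  have hRj : Rseq K j v = j := Rseq_of_notMem hK fun h => ((hlow v).2 h).ne hv
  refine ⟨Rseq_lt_top K j v, fun a ha => (satR_congr_of_inNormalForm (hK a ha) fun u => ?_).1
    (hrho a ha v (hv ▸ ENat.natCast_lt_top j))⟩
  rw [hv, hRj, hlow, Rseq_lt_natCast_iff hK le_rfl]

end Construction

theorem ptl_Rstar_LM_minimal_general {P : Type u} [Fintype P]
    (K : Set (PTL P)) (hK : ∀ a ∈ K, InNormalForm a)
    (R : RankedInterp P) (hR : modelsSet R K) :
    LMle (Rstar K) R.rk := by
  refine LMle_of_forall_cell_subset fun j hcell v (hv : R.rk v = j) => ?_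
  have hlow : ∀ u, R.rk u < j ↔ u ∈ Sseq K j := fun u => by
    rw [← lt_natCast_iff_of_cell_eq hcell, Rstar_lt_natCast_iff hK]
  have hge : ¬ Rstar K v < j := by
    rw [lt_natCast_iff_of_cell_eq hcell, hv]; exact lt_irrefl _
  have hle : Rstar K v ≤ j := ENat.lt_natCast_add_one_iff.1 <| by
    exact_mod_cast (Rstar_lt_natCast_iff hK v (j + 1)).2 (mem_Sseq_succ_of_modelsR hK hR hlow hv)
  exact hle.antisymm (not_lt.1 hge)

/-- `R*_K` is LM-preferred to every ranked model of `K`. -/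
theorem ptl_Rstar_LM_minimal {P : Type u} [Fintype P] [DecidableEq P]
    (K : Set (PTL P)) (hK : ∀ a ∈ K, InNormalForm a)
    (R : RankedInterp P) (hR : modelsSet R K) :
    LMle (Rstar K) R.rk :=
  ptl_Rstar_LM_minimal_general K hK R hR
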